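/- arXiv:1805.03813 — 3 statements merged into one kernel-verified Lean document; each statement's English description precedes it below -/
import Mathlib

section
/- For two positive-semidefinite n×n complex matrices M and N, the equality Tr(M N) = Tr(M) · Tr(N) holds if and only if at least one of the following is true: (1) M = 0; (2) N = 0; (3) there exist positive real numbers m, n and a rank-one orthogonal projection matrix P such that M = m·P and N = n·P. -/
/-!
Factor `A = Xᴴ X`, `B = Yᴴ Y`: then `tr (A B) = ‖Y Xᴴ‖²` (Frobenius), so the trace of a product
of positive semidefinite matrices is nonnegative and vanishes only if the product does. Since
every eigenvalue of `B` is at most `tr B`, the matrix `tr B • 1 - B` is positive semidefinite,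
and `tr A tr B - tr (A B) = tr (A (tr B • 1 - B))`. Equality therefore forces
`A B = tr B • A`, and symmetrically `B A = tr A • B`; taking adjoints, `tr A • B = tr B • A`,
and then `A² = tr A • A`. So `A / tr A` is an orthogonal projection of trace, hence rank, one,
and `B` is a positive multiple of it.
-/

open Matrix ComplexOrder

namespace Matrix

theorem trace_eq_rank_of_isIdempotentElem {n K : Type*} [Fintype n] [DecidableEq n] [Field K]
    {P : Matrix n n K} (hP : IsIdempotentElem P) : P.trace = P.rank := by
  have hproj := LinearMap.IsIdempotentElem.isProj_range _ (hP.map toLinAlgEquiv')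
  rw [← trace_toLin'_eq]
  exact hproj.trace

variable {n 𝕜 : Type*} [Fintype n] [RCLike 𝕜] {A B : Matrix n n 𝕜}

open scoped MatrixOrder in
theorem PosSemidef.exists_eq_conjTranspose_mul_self (hA : A.PosSemidef) :
    ∃ X : Matrix n n 𝕜, A = Xᴴ * X := by
  classical exact CStarAlgebra.nonneg_iff_eq_star_mul_self.mp hA.nonneg

theorem PosSemidef.mul_eq_zero_of_trace_mul_eq_zero (hA : A.PosSemidef) (hB : B.PosSemidef)
    (h : (A * B).trace = 0) : A * B = 0 := by
  obtain ⟨X, rfl⟩ := hA.exists_eq_conjTranspose_mul_self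
  obtain ⟨Y, rfl⟩ := hB.exists_eq_conjTranspose_mul_self
  have hYX : Y * Xᴴ = 0 := by
    rw [← trace_mul_conjTranspose_self_eq_zero_iff, ← h, conjTranspose_mul,
      conjTranspose_conjTranspose, mul_assoc, trace_mul_comm]
    simp only [mul_assoc]
  calc Xᴴ * X * (Yᴴ * Y) = Xᴴ * (Y * Xᴴ)ᴴ * Y := by
        simp only [conjTranspose_mul, conjTranspose_conjTranspose, mul_assoc]
    _ = 0 := by rw [hYX]; simp

open scoped MatrixOrder in
theorem PosSemidef.posSemidef_trace_smul_one_sub [DecidableEq n] (hA : A.PosSemidef) :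
    (A.trace • 1 - A).PosSemidef := by
  have hle : A ≤ algebraMap ℝ _ (∑ i, hA.1.eigenvalues i) := by
    refine le_algebraMap_of_spectrum_le fun x hx => ?_
    obtain ⟨i, rfl⟩ := hA.1.spectrum_real_eq_range_eigenvalues ▸ hx
    exact Finset.single_le_sum (fun j _ => hA.eigenvalues_nonneg j) (Finset.mem_univ i)
  rwa [le_iff, Algebra.algebraMap_eq_smul_one, RCLike.real_smul_eq_coe_smul (K := 𝕜),
    RCLike.ofReal_sum, ← hA.1.trace_eq_sum_eigenvalues] at hle

theorem PosSemidef.trace_mul_nonneg (hA : A.PosSemidef) (hB : B.PosSemidef) :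
    0 ≤ (A * B).trace := by
  obtain ⟨X, rfl⟩ := hA.exists_eq_conjTranspose_mul_self
  rw [mul_assoc, trace_mul_comm]
  exact (hB.mul_mul_conjTranspose_same X).trace_nonneg

theorem PosSemidef.trace_pos_of_ne_zero (hA : A.PosSemidef) (hA0 : A ≠ 0) : 0 < A.trace :=
  hA.trace_nonneg.lt_of_ne' (hA.trace_eq_zero_iff.not.mpr hA0)

variable [DecidableEq n]

theorem PosSemidef.mul_eq_trace_smul_of_trace_mul_eq (hA : A.PosSemidef) (hB : B.PosSemidef)
    (h : (A * B).trace = A.trace * B.trace) : A * B = B.trace • A := by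
  have hzero : (A * (B.trace • 1 - B)).trace = 0 := by
    rw [mul_sub, trace_sub, mul_smul_comm, mul_one, trace_smul, h, smul_eq_mul, mul_comm, sub_self]
  have := hA.mul_eq_zero_of_trace_mul_eq_zero hB.posSemidef_trace_smul_one_sub hzero
  rwa [mul_sub, mul_smul_comm, mul_one, sub_eq_zero, eq_comm] at this

theorem PosSemidef.trace_smul_eq_trace_smul_of_trace_mul_eq (hA : A.PosSemidef)
    (hB : B.PosSemidef) (h : (A * B).trace = A.trace * B.trace) :
    A.trace • B = B.trace • A := by
  have hBA := hB.mul_eq_trace_smul_of_trace_mul_eq hA (by rw [trace_mul_comm, h, mul_comm])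
  have hB_real : star B.trace = B.trace := by rw [← trace_conjTranspose, hB.1.eq]
  calc A.trace • B = B * A := hBA.symm
    _ = (A * B)ᴴ := by rw [conjTranspose_mul, hA.1.eq, hB.1.eq]
    _ = B.trace • A := by
        rw [hA.mul_eq_trace_smul_of_trace_mul_eq hB h, conjTranspose_smul, hA.1.eq, hB_real]

theorem PosSemidef.mul_self_eq_trace_smul_of_trace_mul_eq (hA : A.PosSemidef)
    (hB : B.PosSemidef) (hB0 : B ≠ 0) (h : (A * B).trace = A.trace * B.trace) :
    A * A = A.trace • A := by
  have hAB := hA.mul_eq_trace_smul_of_trace_mul_eq hB h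
  have htrB : B.trace ≠ 0 := (hB.trace_pos_of_ne_zero hB0).ne'
  refine smul_right_injective _ htrB ?_
  calc B.trace • (A * A) = A * (B.trace • A) := (mul_smul_comm _ _ _).symm
    _ = A.trace • (A * B) := by
        rw [← hA.trace_smul_eq_trace_smul_of_trace_mul_eq hB h, mul_smul_comm]
    _ = B.trace • A.trace • A := by rw [hAB, smul_comm]

theorem PosSemidef.exists_rankOne_proj_of_trace_mul_eq (hA : A.PosSemidef) (hB : B.PosSemidef)
    (hA0 : A ≠ 0) (hB0 : B ≠ 0) (h : (A * B).trace = A.trace * B.trace) :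
    ∃ (a b : ℝ) (P : Matrix n n 𝕜), 0 < a ∧ 0 < b ∧ P.IsHermitian ∧ P * P = P ∧ P.rank = 1 ∧
      A = (a : 𝕜) • P ∧ B = (b : 𝕜) • P := by
  obtain ⟨a, ha, hatr⟩ := RCLike.pos_iff_exists_ofReal.mp (hA.trace_pos_of_ne_zero hA0)
  obtain ⟨b, hb, hbtr⟩ := RCLike.pos_iff_exists_ofReal.mp (hB.trace_pos_of_ne_zero hB0)
  have ha0 : (a : 𝕜) ≠ 0 := RCLike.ofReal_ne_zero.mpr ha.ne'
  have hAA := hA.mul_self_eq_trace_smul_of_trace_mul_eq hB hB0 h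
  have hAB := hA.trace_smul_eq_trace_smul_of_trace_mul_eq hB h
  rw [← hatr] at hAA hAB
  rw [← hbtr] at hAB
  set P := (a : 𝕜)⁻¹ • A
  have hA_eq : A = (a : 𝕜) • P := by rw [smul_smul, mul_inv_cancel₀ ha0, one_smul]
  have hPP : P * P = P := by
    rw [smul_mul_smul_comm, hAA, smul_smul, mul_assoc, inv_mul_cancel₀ ha0, mul_one]
  have htrP : P.trace = 1 := by rw [trace_smul, ← hatr, smul_eq_mul, inv_mul_cancel₀ ha0]
  refine ⟨a, b, P, ha, hb, hA.1.smul (IsSelfAdjoint.inv₀ (RCLike.conj_ofReal a)), hPP, ?_,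
    hA_eq, ?_⟩
  · exact_mod_cast (trace_eq_rank_of_isIdempotentElem hPP).symm.trans htrP
  · refine smul_right_injective _ ha0 ?_
    change (a : 𝕜) • B = (a : 𝕜) • (b : 𝕜) • P
    rw [hAB, hA_eq, smul_comm]

end Matrix

/-- For positive-semidefinite n×n complex matrices M and N, Tr(MN) = Tr(M)·Tr(N)
holds iff M = 0, or N = 0, or M = m·P and N = n·P for some positive reals m, n and
a rank-one orthogonal projection P. -/
theorem trace_mul_eq_trace_mul_trace_iff {n : ℕ} (M N : Matrix (Fin n) (Fin n) ℂ)
    (hM : M.PosSemidef) (hN : N.PosSemidef) :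
    (Matrix.trace (M * N)).re = (Matrix.trace M).re * (Matrix.trace N).re ↔
      M = 0 ∨ N = 0 ∨
        ∃ (m' n' : ℝ) (P : Matrix (Fin n) (Fin n) ℂ),
          0 < m' ∧ 0 < n' ∧ P.IsHermitian ∧ P * P = P ∧ P.rank = 1 ∧
          M = (m' : ℂ) • P ∧ N = (n' : ℂ) • P := by
  obtain ⟨s, -, hs⟩ := RCLike.nonneg_iff_exists_ofReal.mp (hM.trace_mul_nonneg hN)
  obtain ⟨t, -, ht⟩ := RCLike.nonneg_iff_exists_ofReal.mp hM.trace_nonneg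
  obtain ⟨u, -, hu⟩ := RCLike.nonneg_iff_exists_ofReal.mp hN.trace_nonneg
  have h_re : (M * N).trace.re = M.trace.re * N.trace.re ↔ (M * N).trace = M.trace * N.trace := by
    rw [← hs, ← ht, ← hu]
    norm_cast
  rw [h_re]
  constructor
  · intro h
    by_cases hM0 : M = 0
    · exact Or.inl hM0
    by_cases hN0 : N = 0
    · exact Or.inr (Or.inl hN0)
    exact Or.inr (Or.inr (hM.exists_rankOne_proj_of_trace_mul_eq hN hM0 hN0 h))
  · rintro (rfl | rfl | ⟨a, b, P, -, -, -, hPP, hP1, rfl, rfl⟩)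
    · simp
    · simp
    · have htrP : P.trace = 1 := by
        rw [trace_eq_rank_of_isIdempotentElem hPP, hP1, Nat.cast_one]
      rw [smul_mul_smul_comm, hPP]
      simp [htrP]
end

section
/- Let (R_μ)_{μ ∈ I} be a finite family of Hermitian n×n complex matrices. Then |∑_{μ,ν ∈ I} Tr(R_μ R_ν²)·Tr(R_μ)| ≤ √(α₁ · α₂³), and moreover √(α₁ · α₂³) ≤ max{α₁², α₂²}; in particular |β₃| ≤ max{α₁², α₂²}. -/
open Matrix Finset

/-- Real part of the trace of a complex matrix (the traces in question are real
for Hermitian matrices). -/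
noncomputable def rtr {α : Type} [Fintype α] (M : Matrix α α ℂ) : ℝ :=
  (Matrix.trace M).re

/-- α₁ = ∑_μ (Tr R_μ)². -/
noncomputable def alpha1 {α I : Type} [Fintype α] [Fintype I]
    (R : I → Matrix α α ℂ) : ℝ := ∑ μ, (rtr (R μ)) ^ 2

/-- α₂ = ∑_μ Tr(R_μ²). -/
noncomputable def alpha2 {α I : Type} [Fintype α] [Fintype I]
    (R : I → Matrix α α ℂ) : ℝ := ∑ μ, rtr (R μ * R μ)

/-- β₁ = ∑_{μ,ν} (Tr(R_μ R_ν))². -/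
noncomputable def beta1 {α I : Type} [Fintype α] [Fintype I]
    (R : I → Matrix α α ℂ) : ℝ := ∑ μ, ∑ ν, (rtr (R μ * R ν)) ^ 2

/-- β₂ = ∑_{μ,ν} Tr(R_μ R_ν)·Tr(R_μ)·Tr(R_ν). -/
noncomputable def beta2 {α I : Type} [Fintype α] [Fintype I]
    (R : I → Matrix α α ℂ) : ℝ := ∑ μ, ∑ ν, rtr (R μ * R ν) * rtr (R μ) * rtr (R ν)

/-- β₃ = ∑_{μ,ν} Tr(R_μ R_ν²)·Tr(R_μ). -/
noncomputable def beta3 {α I : Type} [Fintype α] [Fintype I]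
    (R : I → Matrix α α ℂ) : ℝ := ∑ μ, ∑ ν, rtr (R μ * (R ν * R ν)) * rtr (R μ)

/-- β₄ = ∑_{μ,ν} Tr(R_μ² R_ν²). -/
noncomputable def beta4 {α I : Type} [Fintype α] [Fintype I]
    (R : I → Matrix α α ℂ) : ℝ := ∑ μ, ∑ ν, rtr (R μ * R μ * (R ν * R ν))

/-- β₅ = ∑_{μ,ν} Tr(R_μ R_ν R_μ R_ν). -/
noncomputable def beta5 {α I : Type} [Fintype α] [Fintype I]
    (R : I → Matrix α α ℂ) : ℝ := ∑ μ, ∑ ν, rtr (R μ * R ν * R μ * R ν)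

/-- max_{i,j ∈ {1,2}} |α_i α_j|. -/
noncomputable def maxAlpha {α I : Type} [Fintype α] [Fintype I]
    (R : I → Matrix α α ℂ) : ℝ :=
  max (max |alpha1 R * alpha1 R| |alpha1 R * alpha2 R|)
      (max |alpha2 R * alpha1 R| |alpha2 R * alpha2 R|)

/-- max_{u ∈ {1,…,5}} |β_u|. -/
noncomputable def maxBeta {α I : Type} [Fintype α] [Fintype I]
    (R : I → Matrix α α ℂ) : ℝ :=
  max |beta1 R| (max |beta2 R| (max |beta3 R| (max |beta4 R| |beta5 R|)))

/-!
Put `S = ∑_ν R_ν²`, so that `β₃ = ∑_μ Tr(R_μ S) Tr(R_μ)`. For Hermitian `R_μ`, `Tr(R_μ S)` is the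
Frobenius inner product of `R_μ` and `S`, hence `|Tr(R_μ S)| ≤ ‖R_μ‖ ‖S‖`, and
`‖S‖ ≤ ∑_ν ‖R_ν‖² = α₂` by the triangle inequality and submultiplicativity of the Frobenius norm.
Cauchy–Schwarz over `μ` then gives `β₃² ≤ α₁ ∑_μ ‖R_μ‖² α₂² = α₁ α₂³`. The second inequality is
`α₁ α₂³ ≤ max(α₁, α₂)⁴`.
-/

open scoped Matrix.Norms.Frobenius

namespace Matrix

variable {𝕜 m n : Type*} [RCLike 𝕜] [Fintype m] [Fintype n]

-- The Frobenius norm of a matrix is definitionally the norm of its rows viewed in this `PiLp`.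
theorem trace_conjTranspose_mul_eq_inner (A B : Matrix m n 𝕜) :
    trace (Aᴴ * B) = inner 𝕜 (WithLp.toLp 2 fun i => WithLp.toLp 2 (A i))
      (WithLp.toLp 2 fun i => WithLp.toLp 2 (B i) : PiLp 2 fun _ : m => EuclideanSpace 𝕜 n) := by
  simp only [trace, diag_apply, mul_apply, conjTranspose_apply, PiLp.inner_apply,
    RCLike.inner_apply]
  rw [Finset.sum_comm]
  simp [mul_comm]

theorem norm_trace_conjTranspose_mul_le (A B : Matrix m n 𝕜) :
    ‖trace (Aᴴ * B)‖ ≤ ‖A‖ * ‖B‖ := by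
  rw [trace_conjTranspose_mul_eq_inner]
  exact norm_inner_le_norm _ _

theorem trace_conjTranspose_mul_self (A : Matrix m n 𝕜) :
    trace (Aᴴ * A) = ((‖A‖ ^ 2 : ℝ) : 𝕜) := by
  rw [trace_conjTranspose_mul_eq_inner, inner_self_eq_norm_sq_to_K]
  push_cast
  rfl

end Matrix

section Trace

variable {m : Type} [Fintype m]

theorem rtr_sum {ι : Type*} (s : Finset ι) (f : ι → Matrix m m ℂ) :
    rtr (∑ i ∈ s, f i) = ∑ i ∈ s, rtr (f i) := by
  simp [rtr, trace_sum, Complex.re_sum]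

theorem abs_rtr_mul_le {A : Matrix m m ℂ} (hA : A.IsHermitian) (B : Matrix m m ℂ) :
    |rtr (A * B)| ≤ ‖A‖ * ‖B‖ := by
  have h := norm_trace_conjTranspose_mul_le A B
  rw [hA.eq] at h
  exact (Complex.abs_re_le_norm _).trans h

theorem rtr_mul_self_of_isHermitian {A : Matrix m m ℂ} (hA : A.IsHermitian) :
    rtr (A * A) = ‖A‖ ^ 2 := by
  nth_rw 1 [← hA.eq]
  rw [rtr, trace_conjTranspose_mul_self]
  exact RCLike.ofReal_re (K := ℂ) _

end Trace

section Family

variable {m I : Type} [Fintype m] [Fintype I] (R : I → Matrix m m ℂ)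

theorem alpha1_nonneg : 0 ≤ alpha1 R :=
  Finset.sum_nonneg fun _ _ => sq_nonneg _

theorem beta3_eq_sum_rtr_mul_sum_mul_self :
    beta3 R = ∑ μ, rtr (R μ * ∑ ν, R ν * R ν) * rtr (R μ) := by
  simp only [beta3, Finset.mul_sum, rtr_sum, Finset.sum_mul]

variable {R}

theorem alpha2_eq_sum_norm_sq (hR : ∀ μ, (R μ).IsHermitian) :
    alpha2 R = ∑ μ, ‖R μ‖ ^ 2 :=
  Finset.sum_congr rfl fun μ _ => rtr_mul_self_of_isHermitian (hR μ)

theorem alpha2_nonneg (hR : ∀ μ, (R μ).IsHermitian) : 0 ≤ alpha2 R := by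
  rw [alpha2_eq_sum_norm_sq hR]
  positivity

theorem norm_sum_mul_self_le_alpha2 (hR : ∀ μ, (R μ).IsHermitian) :
    ‖∑ ν, R ν * R ν‖ ≤ alpha2 R := by
  rw [alpha2_eq_sum_norm_sq hR]
  refine (norm_sum_le _ _).trans (Finset.sum_le_sum fun ν _ => ?_)
  simpa only [sq] using frobenius_norm_mul (R ν) (R ν)

theorem beta3_sq_le (hR : ∀ μ, (R μ).IsHermitian) :
    beta3 R ^ 2 ≤ alpha1 R * alpha2 R ^ 3 := by
  set S := ∑ ν, R ν * R ν
  have hRS (μ : I) : rtr (R μ * S) ^ 2 ≤ ‖R μ‖ ^ 2 * alpha2 R ^ 2 := by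
    rw [← mul_pow, ← sq_abs]
    gcongr
    exact (abs_rtr_mul_le (hR μ) S).trans
      (mul_le_mul_of_nonneg_left (norm_sum_mul_self_le_alpha2 hR) (norm_nonneg _))
  calc beta3 R ^ 2 ≤ (∑ μ, rtr (R μ * S) ^ 2) * alpha1 R := by
        rw [beta3_eq_sum_rtr_mul_sum_mul_self]
        exact Finset.sum_mul_sq_le_sq_mul_sq _ _ _
    _ ≤ (∑ μ, ‖R μ‖ ^ 2 * alpha2 R ^ 2) * alpha1 R := by
        gcongr with μ
        · exact alpha1_nonneg R
        · exact hRS μ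
    _ = alpha1 R * alpha2 R ^ 3 := by
        rw [← Finset.sum_mul, ← alpha2_eq_sum_norm_sq hR]
        ring

end Family

theorem Real.sqrt_mul_pow_three_le_max_sq {a b : ℝ} (ha : 0 ≤ a) (hb : 0 ≤ b) :
    √(a * b ^ 3) ≤ max (a ^ 2) (b ^ 2) := by
  rw [Real.sqrt_le_iff]
  refine ⟨le_max_of_le_left (sq_nonneg a), ?_⟩
  rcases le_total a b with hab | hba
  · rw [max_eq_right (pow_le_pow_left₀ ha hab 2)]
    calc a * b ^ 3 ≤ b * b ^ 3 := by gcongr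
      _ = (b ^ 2) ^ 2 := by ring
  · rw [max_eq_left (pow_le_pow_left₀ hb hba 2)]
    calc a * b ^ 3 ≤ a * a ^ 3 := by gcongr
      _ = (a ^ 2) ^ 2 := by ring

/-- For a finite family of Hermitian matrices, |β₃| ≤ √(α₁·α₂³) ≤ max{α₁², α₂²};
in particular |β₃| ≤ max{α₁², α₂²}. -/
theorem abs_beta3_le {n : ℕ} {I : Type} [Fintype I]
    (R : I → Matrix (Fin n) (Fin n) ℂ) (hR : ∀ μ, (R μ).IsHermitian) :
    |beta3 R| ≤ Real.sqrt (alpha1 R * (alpha2 R) ^ 3) ∧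
      Real.sqrt (alpha1 R * (alpha2 R) ^ 3) ≤ max ((alpha1 R) ^ 2) ((alpha2 R) ^ 2) ∧
      |beta3 R| ≤ max ((alpha1 R) ^ 2) ((alpha2 R) ^ 2) := by
  have h₁ : |beta3 R| ≤ √(alpha1 R * alpha2 R ^ 3) := Real.abs_le_sqrt (beta3_sq_le hR)
  have h₂ : √(alpha1 R * alpha2 R ^ 3) ≤ max (alpha1 R ^ 2) (alpha2 R ^ 2) :=
    Real.sqrt_mul_pow_three_le_max_sq (alpha1_nonneg R) (alpha2_nonneg hR)
  exact ⟨h₁, h₂, h₁.trans h₂⟩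
end

section
/- Let (R_μ)_{μ ∈ I} be a finite family of Hermitian n×n complex matrices. Then −∑_{μ,ν ∈ I} Tr(R_μ² R_ν²) ≤ ∑_{μ,ν ∈ I} Tr(R_μ R_ν R_μ R_ν) ≤ ∑_{μ,ν ∈ I} Tr(R_μ² R_ν²); that is, |β₅| ≤ β₄. -/
open Matrix Finset

lemma rtr_nonneg' {α : Type} [Fintype α] (M : Matrix α α ℂ) : 0 ≤ rtr (Mᴴ * M) := by
  unfold rtr
  rw [Matrix.trace]
  simp only [Matrix.diag, Matrix.mul_apply, Matrix.conjTranspose_apply, Complex.re_sum]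
  apply Finset.sum_nonneg; intro i _
  apply Finset.sum_nonneg; intro j _
  rw [Complex.star_def, ← Complex.normSq_eq_conj_mul_self]
  exact Complex.normSq_nonneg _

/-- For a finite family of Hermitian matrices, −β₄ ≤ β₅ ≤ β₄; that is, |β₅| ≤ β₄. -/
theorem abs_beta5_le_beta4 {n : ℕ} {I : Type} [Fintype I]
    (R : I → Matrix (Fin n) (Fin n) ℂ) (hR : ∀ μ, (R μ).IsHermitian) :
    -beta4 R ≤ beta5 R ∧ beta5 R ≤ beta4 R ∧ |beta5 R| ≤ beta4 R := by
  have hX : ∀ μ ν, (R μ * R ν)ᴴ = R ν * R μ := fun μ ν => by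
    rw [Matrix.conjTranspose_mul, (hR μ).eq, (hR ν).eq]
  have cyc : ∀ μ ν, rtr (R μ * R ν * (R ν * R μ)) = rtr (R μ * R μ * (R ν * R ν)) := by
    intro μ ν
    unfold rtr
    rw [show R μ * R ν * (R ν * R μ) = R μ * (R ν * R ν) * R μ by noncomm_ring,
      Matrix.trace_mul_cycle]
  have rtr_add : ∀ (M N : Matrix (Fin n) (Fin n) ℂ), rtr (M + N) = rtr M + rtr N := by
    intro M N; simp [rtr, Matrix.trace_add]
  have rtr_sub : ∀ (M N : Matrix (Fin n) (Fin n) ℂ), rtr (M - N) = rtr M - rtr N := by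
    intro M N; simp [rtr, Matrix.trace_sub]
  -- anticommutator expansion
  have expA : ∀ μ ν, rtr ((R μ * R ν + R ν * R μ)ᴴ * (R μ * R ν + R ν * R μ)) =
      rtr (R μ * R ν * R μ * R ν) + rtr (R ν * R μ * R ν * R μ)
      + rtr (R μ * R μ * (R ν * R ν)) + rtr (R ν * R ν * (R μ * R μ)) := by
    intro μ ν
    rw [Matrix.conjTranspose_add, hX, hX]
    rw [show (R ν * R μ + R μ * R ν) * (R μ * R ν + R ν * R μ)
        = (R μ * R ν * (R μ * R ν) + R ν * R μ * (R ν * R μ))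
          + (R μ * R ν * (R ν * R μ) + R ν * R μ * (R μ * R ν)) by noncomm_ring]
    rw [rtr_add, rtr_add, rtr_add, cyc μ ν, cyc ν μ]
    simp only [mul_assoc]
    ring
  -- commutator expansion
  have expC : ∀ μ ν, rtr ((R μ * R ν - R ν * R μ)ᴴ * (R μ * R ν - R ν * R μ)) =
      rtr (R μ * R μ * (R ν * R ν)) + rtr (R ν * R ν * (R μ * R μ))
      - rtr (R μ * R ν * R μ * R ν) - rtr (R ν * R μ * R ν * R μ) := by
    intro μ ν
    rw [Matrix.conjTranspose_sub, hX, hX]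
    rw [show (R ν * R μ - R μ * R ν) * (R μ * R ν - R ν * R μ)
        = (R μ * R ν * (R ν * R μ) + R ν * R μ * (R μ * R ν))
          - (R μ * R ν * (R μ * R ν) + R ν * R μ * (R ν * R μ)) by noncomm_ring]
    rw [rtr_sub, rtr_add, rtr_add, cyc μ ν, cyc ν μ]
    simp only [mul_assoc]
    ring
  have e5 : ∑ μ : I, ∑ ν : I, rtr (R ν * R μ * R ν * R μ) = beta5 R := by
    rw [Finset.sum_comm]; rfl
  have e4 : ∑ μ : I, ∑ ν : I, rtr (R ν * R ν * (R μ * R μ)) = beta4 R := by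
    rw [Finset.sum_comm]; rfl
  have hA : 0 ≤ 2 * beta5 R + 2 * beta4 R := by
    have : 0 ≤ ∑ μ : I, ∑ ν : I,
        rtr ((R μ * R ν + R ν * R μ)ᴴ * (R μ * R ν + R ν * R μ)) :=
      Finset.sum_nonneg fun μ _ => Finset.sum_nonneg fun ν _ => rtr_nonneg' _
    calc (0:ℝ) ≤ _ := this
      _ = 2 * beta5 R + 2 * beta4 R := by
        simp only [expA, Finset.sum_add_distrib, e5, e4]
        unfold beta5 beta4; ring
  have hC : 0 ≤ 2 * beta4 R - 2 * beta5 R := by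
    have : 0 ≤ ∑ μ : I, ∑ ν : I,
        rtr ((R μ * R ν - R ν * R μ)ᴴ * (R μ * R ν - R ν * R μ)) :=
      Finset.sum_nonneg fun μ _ => Finset.sum_nonneg fun ν _ => rtr_nonneg' _
    calc (0:ℝ) ≤ _ := this
      _ = 2 * beta4 R - 2 * beta5 R := by
        simp only [expC, Finset.sum_sub_distrib, Finset.sum_add_distrib, e5, e4]
        unfold beta5 beta4; ring
  refine ⟨by linarith, by linarith, abs_le.mpr ⟨by linarith, by linarith⟩⟩
end
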